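/- arXiv:1601.02928 — 3 statements merged into one kernel-verified Lean document; each statement's English description precedes it below -/
import Mathlib

section
/- The map φ2, which sends a decreasing weighted subexcedent function (u,w) of size n to the pair (D,w) where D is the path built from u by the rule defining φ2, is a well-defined bijection from the set of decreasing weighted subexcedent functions of size n onto the set of weighted Dyck paths of size n. -/
open scoped Classical
noncomputable section

/-- A subexcedent function of size `n`: `u j ≤ n - j` for `j ∈ [1,n]`, `u` vanishing
outside of `[1,n]`. -/
def IsSubexc (n : ℕ) (u : ℕ → ℕ) : Prop :=
  (∀ j, 1 ≤ j → j ≤ n → u j ≤ n - j) ∧ ∀ j, j = 0 ∨ n < j → u j = 0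
/-- A subexcedent function is decreasing if its nonzero values decrease strictly. -/
def IsDecr (n : ℕ) (u : ℕ → ℕ) : Prop :=
  ∀ i j, 1 ≤ i → i < j → j ≤ n → 0 < u i → 0 < u j → u j < u i
/-- Maximal allowed weight at position `k` for a decreasing subexcedent function `u`:
the number of positions `i < k` with `0 < u i ≤ n - k`. -/
def maxW (n : ℕ) (u : ℕ → ℕ) (k : ℕ) : ℕ :=
  ((Finset.Ico 1 k).filter (fun i => 0 < u i ∧ u i ≤ n - k)).card
/-- A valid weight for a decreasing subexcedent function. -/
def IsValidW (n : ℕ) (u w : ℕ → ℕ) : Prop :=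
  (∀ k, 1 ≤ k → k ≤ n → w k ≤ maxW n u k) ∧ ∀ k, k = 0 ∨ n < k → w k = 0
/-- Height of the path `D` (steps indexed by `[1, …]`, `true` = up-step) after `j` steps. -/
def hgt (D : ℕ → Bool) (j : ℕ) : ℤ :=
  ∑ t ∈ Finset.Icc 1 j, (if D t then (1 : ℤ) else -1)
/-- `D` is a Dyck path of size `n`: `2n` relevant steps (positions `1,…,2n`), never going
below the horizontal axis and ending on it; steps outside `[1,2n]` are normalized to `false`. -/
def IsDyckPath (n : ℕ) (D : ℕ → Bool) : Prop :=
  (∀ j, j ≤ 2 * n → 0 ≤ hgt D j) ∧ hgt D (2 * n) = 0 ∧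
    ∀ j, j = 0 ∨ 2 * n < j → D j = false
/-- `(D, w)` is a weighted Dyck path of size `n`: `w i ≤ (h_i - 1)/2` where `h_i` is the
height of the meeting point of steps `2i-1` and `2i`; `w` is normalized outside `[1,n]`. -/
def IsWDP (n : ℕ) (D : ℕ → Bool) (w : ℕ → ℕ) : Prop :=
  IsDyckPath n D ∧ (∀ i, 1 ≤ i → i ≤ n → 2 * (w i : ℤ) + 1 ≤ hgt D (2 * i - 1)) ∧
    ∀ i, i = 0 ∨ n < i → w i = 0
/-- The Dyck path of φ₂ built from a decreasing subexcedent function `u`: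
`D 1` is up, `D (2n)` is down, `D (2i)` is down iff `n - i` is a value of `u`, and
`D (2i+1)` is down iff `u i = 0`. -/
def phi2Path (n : ℕ) (u : ℕ → ℕ) : ℕ → Bool := fun m =>
  if m = 0 ∨ 2 * n < m then false
  else if m = 1 then true
  else if m = 2 * n then false
  else if m % 2 = 0 then
    if ∃ j ∈ Finset.Icc 1 n, u j = n - m / 2 then false else true
  else
    if u ((m - 1) / 2) = 0 then false else true

/-! ### Binary search trees -/

lemma hgt_zero (D : ℕ → Bool) : hgt D 0 = 0 := by simp [hgt]

lemma hgt_succ (D : ℕ → Bool) (j : ℕ) :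
    hgt D (j + 1) = hgt D j + (if D (j+1) then (1:ℤ) else -1) := by
  rw [hgt, hgt, ← Finset.sum_Icc_succ_top (by omega)]

/-- Number of up odd-steps among positions 2i+1, i < k. -/
def SC (D : ℕ → Bool) (k : ℕ) : ℕ :=
  ((Finset.Ico 1 k).filter (fun i => D (2*i+1) = true)).card

/-- Number of down even-steps among positions 2i, i < k. -/
def VC (D : ℕ → Bool) (k : ℕ) : ℕ :=
  ((Finset.Ico 1 k).filter (fun i => D (2*i) = false)).card

lemma SC_succ (D : ℕ → Bool) (k : ℕ) (hk : 1 ≤ k) :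
    SC D (k+1) = SC D k + (if D (2*k+1) = true then 1 else 0) := by
  unfold SC
  rw [Nat.Ico_succ_right_eq_insert_Ico hk, Finset.filter_insert]
  split
  · rw [Finset.card_insert_of_notMem (by simp)]
  · simp

lemma VC_succ (D : ℕ → Bool) (k : ℕ) (hk : 1 ≤ k) :
    VC D (k+1) = VC D k + (if D (2*k) = false then 1 else 0) := by
  unfold VC
  rw [Nat.Ico_succ_right_eq_insert_Ico hk, Finset.filter_insert]
  split
  · rw [Finset.card_insert_of_notMem (by simp)]
  · simp

/-- Generic height formula at odd positions. -/
lemma hgt_odd (D : ℕ → Bool) (hD1 : D 1 = true) (k : ℕ) (hk : 1 ≤ k) :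
    hgt D (2*k - 1) = 1 + 2 * ((SC D k : ℤ) - (VC D k : ℤ)) := by
  induction k with
  | zero => omega
  | succ k ih =>
    rcases Nat.eq_zero_or_pos k with rfl | hk1
    · simp [hgt, hD1, SC, VC]
    · have h2 : 2 * (k+1) - 1 = (2*k - 1) + 1 + 1 := by omega
      have h3 : 2*k - 1 + 1 = 2*k := by omega
      rw [h2, hgt_succ, hgt_succ, h3, ih hk1, SC_succ D k hk1, VC_succ D k hk1]
      cases hb : D (2*k) <;> cases hb2 : D (2*k+1) <;> simp [hb, hb2] <;> push_cast <;> ring_nf <;> omega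


lemma phi2_out (n : ℕ) (u : ℕ → ℕ) (m : ℕ) (h : m = 0 ∨ 2 * n < m) :
    phi2Path n u m = false := by
  simp only [phi2Path]; rw [if_pos h]

lemma phi2_one (n : ℕ) (u : ℕ → ℕ) (hn : 1 ≤ n) : phi2Path n u 1 = true := by
  simp only [phi2Path]; rw [if_neg (by omega)]; norm_num

lemma phi2_last (n : ℕ) (u : ℕ → ℕ) (hn : 1 ≤ n) : phi2Path n u (2*n) = false := by
  simp only [phi2Path]; rw [if_neg (by omega), if_neg (by omega)]; norm_num

lemma phi2_odd (n : ℕ) (u : ℕ → ℕ) (i : ℕ) (h1 : 1 ≤ i) (h2 : i < n) :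
    phi2Path n u (2*i+1) = (if u i = 0 then false else true) := by
  simp only [phi2Path]
  rw [if_neg (by omega), if_neg (by omega), if_neg (by omega), if_neg (by omega)]
  norm_num

lemma phi2_even (n : ℕ) (u : ℕ → ℕ) (i : ℕ) (h1 : 1 ≤ i) (h2 : i < n) :
    phi2Path n u (2*i) =
      (if ∃ j ∈ Finset.Icc 1 n, u j = n - i then false else true) := by
  simp only [phi2Path]
  rw [if_neg (by omega), if_neg (by omega), if_neg (by omega), if_pos (by omega)]
  norm_num

lemma decr_inj (n : ℕ) (u : ℕ → ℕ) (hd : IsDecr n u) {a b : ℕ}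
    (ha1 : 1 ≤ a) (ha2 : a ≤ n) (hb1 : 1 ≤ b) (hb2 : b ≤ n)
    (hna : u a ≠ 0) (hne : u a = u b) : a = b := by
  rcases lt_trichotomy a b with h | h | h
  · have := hd a b ha1 h hb2 (by omega) (by omega); omega
  · exact h
  · have := hd b a hb1 h ha2 (by omega) (by omega); omega

lemma count_split (n : ℕ) (u : ℕ → ℕ) (hs : IsSubexc n u) (hd : IsDecr n u)
    (k : ℕ) (hk1 : 1 ≤ k) (hk2 : k ≤ n) :
    ((Finset.Ico 1 k).filter (fun i => u i ≠ 0)).card =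
      maxW n u k + ((Finset.Ico 1 k).filter
        (fun i => ∃ j ∈ Finset.Icc 1 n, u j = n - i)).card := by
  have hsplit : ((Finset.Ico 1 k).filter (fun i => u i ≠ 0)) =
      ((Finset.Ico 1 k).filter (fun i => 0 < u i ∧ u i ≤ n - k)) ∪
      ((Finset.Ico 1 k).filter (fun i => n - k < u i)) := by
    rw [← Finset.filter_or]
    apply Finset.filter_congr
    intro i _; constructor <;> intro h <;> omega
  have hdisj : Disjoint ((Finset.Ico 1 k).filter (fun i => 0 < u i ∧ u i ≤ n - k))
      ((Finset.Ico 1 k).filter (fun i => n - k < u i)) := by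
    apply Finset.disjoint_filter_filter'
    rw [disjoint_iff_inf_le]
    intro i hi
    simp only [Pi.inf_apply, inf_Prop_eq] at hi
    omega
  rw [hsplit, Finset.card_union_of_disjoint hdisj, maxW]
  congr 1
  apply Finset.card_bij (fun i _ => n - u i)
  · intro a ha
    simp only [Finset.mem_filter, Finset.mem_Ico] at ha ⊢
    have hua := hs.1 a ha.1.1 (by omega)
    refine ⟨⟨by omega, by omega⟩, a, by simp [Finset.mem_Icc]; omega, by omega⟩
  · intro a ha b hb h
    simp only [Finset.mem_filter, Finset.mem_Ico] at ha hb
    have hua := hs.1 a ha.1.1 (by omega)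
    have hub := hs.1 b hb.1.1 (by omega)
    exact decr_inj n u hd ha.1.1 (by omega) hb.1.1 (by omega) (by omega) (by omega)
  · intro b hb
    simp only [Finset.mem_filter, Finset.mem_Ico, Finset.mem_Icc] at hb
    obtain ⟨⟨hb1, hb2⟩, j, ⟨hj1, hj2⟩, hj3⟩ := hb
    have huj := hs.1 j hj1 hj2
    refine ⟨j, ?_, by omega⟩
    simp only [Finset.mem_filter, Finset.mem_Ico]
    omega


lemma SC_phi2 (n : ℕ) (u : ℕ → ℕ) (k : ℕ) (hk2 : k ≤ n) :
    SC (phi2Path n u) k = ((Finset.Ico 1 k).filter (fun i => u i ≠ 0)).card := by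
  unfold SC; congr 1
  apply Finset.filter_congr
  intro i hi
  simp only [Finset.mem_Ico] at hi
  rw [phi2_odd n u i hi.1 (by omega)]
  by_cases h : u i = 0 <;> simp [h]

lemma VC_phi2 (n : ℕ) (u : ℕ → ℕ) (k : ℕ) (hk2 : k ≤ n) :
    VC (phi2Path n u) k = ((Finset.Ico 1 k).filter
      (fun i => ∃ j ∈ Finset.Icc 1 n, u j = n - i)).card := by
  unfold VC; congr 1
  ext i
  simp only [Finset.mem_filter, Finset.mem_Ico, and_congr_right_iff]
  intro hi
  rw [phi2_even n u i hi.1 (by omega)]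
  by_cases h : ∃ j ∈ Finset.Icc 1 n, u j = n - i <;> simp [h]

lemma hgt_phi2_odd (n : ℕ) (u : ℕ → ℕ) (hs : IsSubexc n u) (hd : IsDecr n u)
    (k : ℕ) (hk1 : 1 ≤ k) (hk2 : k ≤ n) :
    hgt (phi2Path n u) (2*k - 1) = 1 + 2 * (maxW n u k : ℤ) := by
  rw [hgt_odd _ (phi2_one n u (by omega)) k hk1, SC_phi2 n u k hk2, VC_phi2 n u k hk2,
    count_split n u hs hd k hk1 hk2]
  push_cast
  ring

lemma maxW_last (n : ℕ) (u : ℕ → ℕ) : maxW n u n = 0 := by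
  rw [maxW, Finset.card_eq_zero, Finset.filter_eq_empty_iff]
  intro i _
  omega

lemma phi2_mapsTo (n : ℕ) (u w : ℕ → ℕ) (hs : IsSubexc n u) (hd : IsDecr n u)
    (hw : IsValidW n u w) : IsWDP n (phi2Path n u) w := by
  have hnonneg : ∀ j, j ≤ 2 * n → 0 ≤ hgt (phi2Path n u) j := by
    intro j hj
    rcases Nat.eq_zero_or_pos j with rfl | hj0
    · rw [hgt_zero]
    by_cases hpar : j % 2 = 1
    · have hk : j = 2 * ((j+1)/2) - 1 := by omega
      rw [hk, hgt_phi2_odd n u hs hd ((j+1)/2) (by omega) (by omega)]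
      positivity
    · have hk : j = (2 * (j/2) - 1) + 1 := by omega
      rw [hk, hgt_succ, hgt_phi2_odd n u hs hd (j/2) (by omega) (by omega)]
      split <;> omega
  refine ⟨⟨hnonneg, ?_, fun j hj => phi2_out n u j hj⟩, ?_, hw.2⟩
  · rcases Nat.eq_zero_or_pos n with rfl | hn
    · rw [show 2*0 = 0 from rfl, hgt_zero]
    · have hk : 2 * n = (2 * n - 1) + 1 := by omega
      rw [hk, hgt_succ, show 2*n-1+1 = 2*n by omega,
        hgt_phi2_odd n u hs hd n hn le_rfl, phi2_last n u hn, maxW_last]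
      norm_num
  · intro i hi1 hi2
    rw [hgt_phi2_odd n u hs hd i hi1 hi2]
    have := hw.1 i hi1 hi2
    omega

lemma inj_step (n : ℕ) (u u' : ℕ → ℕ) (hs' : IsSubexc n u') (hd : IsDecr n u) (hd' : IsDecr n u')
    (hvals : ∀ v, 1 ≤ v → v < n → (∃ j ∈ Finset.Icc 1 n, u' j = v) →
      (∃ j ∈ Finset.Icc 1 n, u j = v))
    (i : ℕ) (hi1 : 1 ≤ i) (hi2 : i < n) (hu : u i ≠ 0) (hu' : u' i ≠ 0)
    (ih : ∀ j, j < i → u j = u' j) : u' i ≤ u i := by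
  have hv2 : u' i ≤ n - i := hs'.1 i hi1 (le_of_lt hi2)
  obtain ⟨j, hj, hju⟩ := hvals (u' i) (by omega) (by omega)
    ⟨i, by simp only [Finset.mem_Icc]; omega, rfl⟩
  simp only [Finset.mem_Icc] at hj
  rcases lt_trichotomy j i with h | rfl | h
  · have h1 := ih j h
    have h2 := hd' j i (by omega) h (by omega) (by omega) (by omega)
    omega
  · omega
  · have := hd i j hi1 h hj.2 (by omega) (by omega)
    omega

lemma inj_eq (n : ℕ) (u u' : ℕ → ℕ) (hs : IsSubexc n u) (hs' : IsSubexc n u')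
    (hd : IsDecr n u) (hd' : IsDecr n u')
    (hvals : ∀ v, 1 ≤ v → v < n → ((∃ j ∈ Finset.Icc 1 n, u j = v) ↔
      (∃ j ∈ Finset.Icc 1 n, u' j = v)))
    (hzero : ∀ i, 1 ≤ i → i < n → (u i = 0 ↔ u' i = 0)) :
    ∀ i, u i = u' i := by
  intro i
  induction i using Nat.strong_induction_on with
  | _ i ih =>
  by_cases hi0 : i = 0 ∨ n < i
  · rw [hs.2 i hi0, hs'.2 i hi0]
  push_neg at hi0
  have hi1 : 1 ≤ i := by omega
  have hi2 : i ≤ n := hi0.2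
  by_cases hin : i = n
  · have h1 := hs.1 i hi1 hi2
    have h2 := hs'.1 i hi1 hi2
    omega
  by_cases hz : u i = 0
  · rw [hz, ← (hzero i hi1 (by omega)).mp hz]
  · have hz' : u' i ≠ 0 := fun h => hz ((hzero i hi1 (by omega)).mpr h)
    have h1 := inj_step n u u' hs' hd hd' (fun v a b h => (hvals v a b).mpr h)
      i hi1 (by omega) hz hz' (fun j hj => ih j hj)
    have h2 := inj_step n u' u hs hd' hd (fun v a b h => (hvals v a b).mp h)
      i hi1 (by omega) hz' hz (fun j hj => (ih j hj).symm)
    omega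

lemma path_eq_zero_iff (n : ℕ) (u u' : ℕ → ℕ)
    (h : phi2Path n u = phi2Path n u') (i : ℕ) (hi1 : 1 ≤ i) (hi2 : i < n) :
    u i = 0 ↔ u' i = 0 := by
  have hc := congrFun h (2*i+1)
  rw [phi2_odd n u i hi1 hi2, phi2_odd n u' i hi1 hi2] at hc
  by_cases h1 : u i = 0 <;> by_cases h2 : u' i = 0
  · exact iff_of_true h1 h2
  · exfalso; rw [if_pos h1, if_neg h2] at hc; simp at hc
  · exfalso; rw [if_neg h1, if_pos h2] at hc; simp at hc
  · exact iff_of_false h1 h2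

lemma path_eq_vals_iff (n : ℕ) (u u' : ℕ → ℕ)
    (h : phi2Path n u = phi2Path n u') (v : ℕ) (hv1 : 1 ≤ v) (hv2 : v < n) :
    (∃ j ∈ Finset.Icc 1 n, u j = v) ↔ (∃ j ∈ Finset.Icc 1 n, u' j = v) := by
  have hc := congrFun h (2*(n-v))
  rw [phi2_even n u (n-v) (by omega) (by omega),
    phi2_even n u' (n-v) (by omega) (by omega)] at hc
  rw [show n - (n - v) = v by omega] at hc
  by_cases h1 : ∃ j ∈ Finset.Icc 1 n, u j = v <;>
    by_cases h2 : ∃ j ∈ Finset.Icc 1 n, u' j = v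
  · exact iff_of_true h1 h2
  · exfalso; rw [if_pos h1, if_neg h2] at hc; simp at hc
  · exfalso; rw [if_neg h1, if_pos h2] at hc; simp at hc
  · exact iff_of_false h1 h2

/-- the `r`-th smallest element of `V` (0-indexed), or `0` out of range. -/
noncomputable def nthV (V : Finset ℕ) (r : ℕ) : ℕ :=
  if h : r < V.card then (V.orderIsoOfFin rfl ⟨r, h⟩ : ℕ) else 0

lemma rank_iso (V : Finset ℕ) (ρ : Fin V.card) :
    (V.filter (· < (V.orderIsoOfFin rfl ρ : ℕ))).card = ρ := by
  have himg : V.filter (· < (V.orderIsoOfFin rfl ρ : ℕ)) =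
      (Finset.Iio ρ).image (fun j => (V.orderIsoOfFin rfl j : ℕ)) := by
    ext x
    simp only [Finset.mem_filter, Finset.mem_image, Finset.mem_Iio]
    constructor
    · rintro ⟨hx, hlt⟩
      refine ⟨(V.orderIsoOfFin rfl).symm ⟨x, hx⟩, ?_, by simp⟩
      rw [← (V.orderIsoOfFin rfl).lt_iff_lt, OrderIso.apply_symm_apply]
      exact Subtype.mk_lt_mk.mpr hlt
    · rintro ⟨j, hj, rfl⟩
      refine ⟨Finset.coe_mem _, ?_⟩
      exact Subtype.coe_lt_coe.mpr ((V.orderIsoOfFin rfl).strictMono hj)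
  rw [himg, Finset.card_image_of_injective _
    (fun a b hab => (V.orderIsoOfFin rfl).injective (Subtype.coe_injective hab)),
    Fin.card_Iio]

lemma nthV_mem (V : Finset ℕ) (r : ℕ) (h : r < V.card) : nthV V r ∈ V := by
  rw [nthV, dif_pos h]; exact Finset.coe_mem _

lemma nthV_strictMono (V : Finset ℕ) {r r' : ℕ} (h : r < r') (h' : r' < V.card) :
    nthV V r < nthV V r' := by
  rw [nthV, nthV, dif_pos h', dif_pos (lt_trans h h')]
  exact Subtype.coe_lt_coe.mpr ((V.orderIsoOfFin rfl).strictMono (by exact h))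

lemma nthV_rank (V : Finset ℕ) (r : ℕ) (h : r < V.card) :
    (V.filter (· < nthV V r)).card = r := by
  rw [nthV, dif_pos h]; exact rank_iso V ⟨r, h⟩

lemma rank_lt_card {V : Finset ℕ} {v : ℕ} (h : v ∈ V) :
    (V.filter (· < v)).card < V.card := by
  apply Finset.card_lt_card
  rw [Finset.ssubset_iff_of_subset (Finset.filter_subset _ _)]
  exact ⟨v, h, by simp⟩

lemma nthV_of_rank {V : Finset ℕ} {v : ℕ} (h : v ∈ V) :
    nthV V ((V.filter (· < v)).card) = v := by
  set ρ := (V.orderIsoOfFin rfl).symm ⟨v, h⟩ with hρ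
  have h1 : (V.orderIsoOfFin rfl ρ : ℕ) = v := by
    rw [hρ, OrderIso.apply_symm_apply]
  have h2 : (V.filter (· < v)).card = (ρ : ℕ) := by rw [← h1]; exact rank_iso V ρ
  rw [h2, nthV, dif_pos ρ.isLt, Fin.eta, h1]

lemma rank_succ_le {V : Finset ℕ} {r i : ℕ} (hr : r < V.card) (hlt : nthV V r < i) :
    r + 1 ≤ (V.filter (· < i)).card := by
  have hins : insert (nthV V r) (V.filter (· < nthV V r)) ⊆ V.filter (· < i) := by
    intro x hx
    rcases Finset.mem_insert.mp hx with rfl | hx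
    · exact Finset.mem_filter.mpr ⟨nthV_mem V r hr, hlt⟩
    · rcases Finset.mem_filter.mp hx with ⟨h1, h2⟩
      exact Finset.mem_filter.mpr ⟨h1, lt_trans h2 hlt⟩
  have := Finset.card_le_card hins
  rwa [Finset.card_insert_of_notMem (by simp), nthV_rank V r hr] at this

def SsetD (n : ℕ) (D : ℕ → Bool) : Finset ℕ :=
  (Finset.Ico 1 n).filter (fun i => D (2*i+1) = true)
def VIsetD (n : ℕ) (D : ℕ → Bool) : Finset ℕ :=
  (Finset.Ico 1 n).filter (fun i => D (2*i) = false)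

noncomputable def invU (n : ℕ) (D : ℕ → Bool) : ℕ → ℕ := fun i =>
  if i ∈ SsetD n D then
    n - nthV (VIsetD n D) (((SsetD n D).filter (· < i)).card)
  else 0

lemma SC_filter (n : ℕ) (D : ℕ → Bool) (k : ℕ) (hk : k ≤ n) :
    SC D k = ((SsetD n D).filter (· < k)).card := by
  unfold SC SsetD
  congr 1
  rw [Finset.filter_filter]
  ext x
  simp only [Finset.mem_filter, Finset.mem_Ico]
  constructor
  · rintro ⟨⟨h1, h2⟩, h3⟩; exact ⟨⟨h1, by omega⟩, h3, h2⟩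
  · rintro ⟨⟨h1, h2⟩, h3, h4⟩; exact ⟨⟨h1, h4⟩, h3⟩

lemma VC_filter (n : ℕ) (D : ℕ → Bool) (k : ℕ) (hk : k ≤ n) :
    VC D k = ((VIsetD n D).filter (· < k)).card := by
  unfold VC VIsetD
  congr 1
  rw [Finset.filter_filter]
  ext x
  simp only [Finset.mem_filter, Finset.mem_Ico]
  constructor
  · rintro ⟨⟨h1, h2⟩, h3⟩; exact ⟨⟨h1, by omega⟩, h3, h2⟩
  · rintro ⟨⟨h1, h2⟩, h3, h4⟩; exact ⟨⟨h1, h4⟩, h3⟩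

lemma surj_aux (n : ℕ) (hn : 1 ≤ n) (D : ℕ → Bool) (w : ℕ → ℕ) (hD : IsWDP n D w) :
    (IsSubexc n (invU n D) ∧ IsDecr n (invU n D) ∧ IsValidW n (invU n D) w) ∧
      phi2Path n (invU n D) = D := by
  obtain ⟨⟨hpos, hend, hout⟩, hwt, hwout⟩ := hD
  have hD1 : D 1 = true := by
    have h := hpos 1 (by omega)
    rw [show (1:ℕ) = 0 + 1 from rfl, hgt_succ, hgt_zero] at h
    by_contra hc
    rw [Bool.not_eq_true] at hc
    rw [hc] at h; norm_num at h
  have hineq : ∀ k, 1 ≤ k → k ≤ n → VC D k ≤ SC D k := by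
    intro k h1 h2
    have h := hpos (2*k-1) (by omega)
    rw [hgt_odd D hD1 k h1] at h
    omega
  have hstep : hgt D (2*n) = hgt D (2*n-1) + (if D (2*n) then (1:ℤ) else -1) := by
    have h := hgt_succ D (2*n-1)
    rwa [show 2*n-1+1 = 2*n by omega] at h
  rw [hend, hgt_odd D hD1 n hn] at hstep
  have hVS := hineq n hn le_rfl
  have hfalse : D (2*n) = false := by
    cases hDn : D (2*n)
    · rfl
    · rw [hDn] at hstep; exfalso; simp at hstep; omega
  rw [hfalse] at hstep; simp at hstep
  have hSfull : (SsetD n D).filter (· < n) = SsetD n D :=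
    Finset.filter_true_of_mem
      (fun x hx => (Finset.mem_Ico.mp (Finset.mem_filter.mp hx).1).2)
  have hVfull : (VIsetD n D).filter (· < n) = VIsetD n D :=
    Finset.filter_true_of_mem
      (fun x hx => (Finset.mem_Ico.mp (Finset.mem_filter.mp hx).1).2)
  have hcards : (VIsetD n D).card = (SsetD n D).card := by
    have h1 := SC_filter n D n le_rfl
    have h2 := VC_filter n D n le_rfl
    rw [hSfull] at h1
    rw [hVfull] at h2
    omega
  have hrk : ∀ i, i ∈ SsetD n D → ((SsetD n D).filter (· < i)).card < (VIsetD n D).card := by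
    intro i hi; rw [hcards]; exact rank_lt_card hi
  have hval : ∀ i, i ∈ SsetD n D →
      invU n D i = n - nthV (VIsetD n D) (((SsetD n D).filter (· < i)).card) :=
    fun i hi => if_pos hi
  have hval0 : ∀ i, i ∉ SsetD n D → invU n D i = 0 := fun i hi => if_neg hi
  have hVbd : ∀ r, r < (VIsetD n D).card →
      1 ≤ nthV (VIsetD n D) r ∧ nthV (VIsetD n D) r < n := by
    intro r hr
    exact Finset.mem_Ico.mp (Finset.mem_filter.mp (nthV_mem _ r hr)).1
  have hSbd : ∀ i, i ∈ SsetD n D → 1 ≤ i ∧ i < n := by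
    intro i hi
    exact Finset.mem_Ico.mp (Finset.mem_filter.mp hi).1
  have hbd : ∀ i, i ∈ SsetD n D →
      i ≤ nthV (VIsetD n D) (((SsetD n D).filter (· < i)).card) := by
    intro i hi
    by_contra hlt
    push_neg at hlt
    have hib := hSbd i hi
    have h1 := rank_succ_le (hrk i hi) hlt
    have h2 := hineq i hib.1 (by omega)
    rw [SC_filter n D i (by omega), VC_filter n D i (by omega)] at h2
    omega
  have hsupp : ∀ i, invU n D i ≠ 0 ↔ i ∈ SsetD n D := by
    intro i
    constructor
    · intro h
      by_contra hc; exact h (hval0 i hc)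
    · intro hi
      rw [hval i hi]
      have h1 := hVbd _ (hrk i hi)
      have h2 := hbd i hi
      have h3 := hSbd i hi
      omega
  have hsub : IsSubexc n (invU n D) := by
    constructor
    · intro j h1 h2
      by_cases hj : j ∈ SsetD n D
      · rw [hval j hj]
        have := hbd j hj
        omega
      · rw [hval0 j hj]; omega
    · intro j hj
      apply hval0
      intro hc
      have := hSbd j hc
      omega
  have hdec : IsDecr n (invU n D) := by
    intro i j h1 hij h2 hui huj
    have hiS : i ∈ SsetD n D := (hsupp i).mp (by omega)
    have hjS : j ∈ SsetD n D := (hsupp j).mp (by omega)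
    have hrank : ((SsetD n D).filter (· < i)).card + 1 ≤
        ((SsetD n D).filter (· < j)).card := by
      have hins : insert i ((SsetD n D).filter (· < i)) ⊆ (SsetD n D).filter (· < j) := by
        intro x hx
        rcases Finset.mem_insert.mp hx with rfl | hx
        · exact Finset.mem_filter.mpr ⟨hiS, hij⟩
        · rcases Finset.mem_filter.mp hx with ⟨ha, hb⟩
          exact Finset.mem_filter.mpr ⟨ha, by omega⟩
      have := Finset.card_le_card hins
      rwa [Finset.card_insert_of_notMem (by simp)] at this
    have hmono := nthV_strictMono (VIsetD n D) (by omega : ((SsetD n D).filter (· < i)).card < ((SsetD n D).filter (· < j)).card) (hrk j hjS)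
    rw [hval i hiS, hval j hjS]
    have hv1 := hVbd _ (hrk i hiS)
    have hv2 := hVbd _ (hrk j hjS)
    omega
  have hvals : ∀ i, 1 ≤ i → i < n →
      ((∃ j ∈ Finset.Icc 1 n, invU n D j = n - i) ↔ i ∈ VIsetD n D) := by
    intro i h1 h2
    constructor
    · rintro ⟨j, hj, hju⟩
      have hjne : invU n D j ≠ 0 := by omega
      have hjS := (hsupp j).mp hjne
      rw [hval j hjS] at hju
      have hv := hVbd _ (hrk j hjS)
      have heq : nthV (VIsetD n D) (((SsetD n D).filter (· < j)).card) = i := by omega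
      rw [← heq]
      exact nthV_mem _ _ (hrk j hjS)
    · intro hiV
      have hrS : ((VIsetD n D).filter (· < i)).card < (SsetD n D).card := by
        rw [← hcards]; exact rank_lt_card hiV
      refine ⟨nthV (SsetD n D) (((VIsetD n D).filter (· < i)).card), ?_, ?_⟩
      · have hm := hSbd _ (nthV_mem _ _ hrS)
        simp only [Finset.mem_Icc]
        omega
      · have hmS := nthV_mem _ (((VIsetD n D).filter (· < i)).card) hrS
        rw [hval _ hmS, nthV_rank _ _ hrS, nthV_of_rank hiV]
  have hpath : phi2Path n (invU n D) = D := by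
    funext m
    by_cases h0 : m = 0 ∨ 2 * n < m
    · rw [phi2_out n _ m h0, hout m h0]
    push_neg at h0
    by_cases h1 : m = 1
    · subst h1; rw [phi2_one n _ hn, hD1]
    by_cases h2 : m = 2 * n
    · subst h2; rw [phi2_last n _ hn, hfalse]
    by_cases hp : m % 2 = 0
    · have hm : m = 2 * (m / 2) := by omega
      have hb1 : 1 ≤ m / 2 := by omega
      have hb2 : m / 2 < n := by omega
      rw [hm, phi2_even n _ (m/2) hb1 hb2]
      by_cases hiV : m / 2 ∈ VIsetD n D
      · rw [if_pos ((hvals (m/2) hb1 hb2).mpr hiV)]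
        exact ((Finset.mem_filter.mp hiV).2).symm
      · rw [if_neg (fun hc => hiV ((hvals (m/2) hb1 hb2).mp hc))]
        have hDt : D (2*(m/2)) = true := by
          by_contra hc
          rw [Bool.not_eq_true] at hc
          exact hiV (Finset.mem_filter.mpr ⟨Finset.mem_Ico.mpr ⟨hb1, hb2⟩, hc⟩)
        exact hDt.symm
    · have hm : m = 2 * ((m-1)/2) + 1 := by omega
      have hb1 : 1 ≤ (m-1)/2 := by omega
      have hb2 : (m-1)/2 < n := by omega
      rw [hm, phi2_odd n _ _ hb1 hb2]
      by_cases hiS : (m-1)/2 ∈ SsetD n D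
      · rw [if_neg ((hsupp _).mpr hiS)]
        exact ((Finset.mem_filter.mp hiS).2).symm
      · rw [if_pos (by by_contra hc; exact hiS ((hsupp _).mp hc))]
        have hDf : D (2*((m-1)/2)+1) = false := by
          by_contra hc
          rw [Bool.not_eq_false] at hc
          exact hiS (Finset.mem_filter.mpr ⟨Finset.mem_Ico.mpr ⟨hb1, hb2⟩, hc⟩)
        exact hDf.symm
  have hvw : IsValidW n (invU n D) w := by
    constructor
    · intro k h1 h2
      have h := hwt k h1 h2
      rw [← hpath, hgt_phi2_odd n _ hsub hdec k h1 h2] at h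
      omega
    · exact hwout
  exact ⟨⟨hsub, hdec, hvw⟩, hpath⟩

/-- The map φ₂, sending a decreasing weighted subexcedent function `(u, w)` of size `n`
to the pair `(D, w)` where `D` is the path built from `u`, is a well-defined bijection
from decreasing weighted subexcedent functions of size `n` onto weighted Dyck paths of
size `n`. -/
theorem phi2_bijective (n : ℕ) :
    Set.BijOn (fun p : (ℕ → ℕ) × (ℕ → ℕ) => (phi2Path n p.1, p.2))
      {p : (ℕ → ℕ) × (ℕ → ℕ) | IsSubexc n p.1 ∧ IsDecr n p.1 ∧ IsValidW n p.1 p.2}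
      {q : (ℕ → Bool) × (ℕ → ℕ) | IsWDP n q.1 q.2} := by
  refine ⟨?_, ?_, ?_⟩
  · rintro ⟨u, w⟩ ⟨hs, hd, hw⟩
    exact phi2_mapsTo n u w hs hd hw
  · rintro ⟨u, w⟩ ⟨hs, hd, hw⟩ ⟨u', w'⟩ ⟨hs', hd', hw'⟩ heq
    simp only [Prod.mk.injEq] at heq
    obtain ⟨hpath, hww⟩ := heq
    have hu : u = u' := funext (inj_eq n u u' hs hs' hd hd'
      (fun v a b => path_eq_vals_iff n u u' hpath v a b)
      (fun i a b => path_eq_zero_iff n u u' hpath i a b))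
    simp only [Prod.mk.injEq]
    exact ⟨hu, hww⟩
  · rintro ⟨D, w⟩ hq
    rcases Nat.eq_zero_or_pos n with rfl | hn
    · refine ⟨(fun _ => 0, w), ⟨⟨fun j h1 h2 => by omega, fun j _ => rfl⟩,
        fun i j h1 h2 h3 h4 h5 => by omega,
        fun k h1 h2 => by omega, hq.2.2⟩, ?_⟩
      simp only [Prod.mk.injEq]
      refine ⟨funext fun m => ?_, trivial⟩
      rw [phi2_out 0 _ m (by omega)]
      exact (hq.1.2.2 m (by omega)).symm
    · obtain ⟨⟨hsub, hdec, hvw⟩, hpath⟩ := surj_aux n hn D w hq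
      exact ⟨(invU n D, w), ⟨hsub, hdec, hvw⟩, by simp [hpath]⟩
end
end

section
/- Let σ be a permutation of size n and (D,w) = ψ_FV^0(σ) its image under the type-0 Françon–Viennot map. Then GC^0(σ) = GC^0(D,w), Rec(σ) = DC^0(D,w), and tot(σ) = tw(D,w). -/
open scoped Classical
noncomputable section

/-- Value of `σ` at the 1-indexed position `j`, with the convention that positions
outside `[1,n]` (in particular positions `0` and `n+1`) carry the value `0`. -/
def pval (n : ℕ) (σ : Equiv.Perm (Fin n)) (j : ℕ) : ℕ :=
  if h : 1 ≤ j ∧ j ≤ n then ((σ ⟨j - 1, by omega⟩ : Fin n) : ℕ) + 1 else 0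
/-- The (1-indexed) position of a value `v ∈ [1,n]` in `σ`. -/
def ppos (n : ℕ) (σ : Equiv.Perm (Fin n)) (v : ℕ) : ℕ :=
  if h : 1 ≤ v ∧ v ≤ n then ((σ.symm ⟨v - 1, by omega⟩ : Fin n) : ℕ) + 1 else 0
/-- Number of 31-2 patterns of `σ`. -/
def tot (n : ℕ) (σ : Equiv.Perm (Fin n)) : ℕ :=
  ((Finset.Icc 1 n ×ˢ Finset.Icc 1 n).filter (fun p =>
    p.1 + 1 < p.2 ∧ pval n σ (p.1 + 1) < pval n σ p.2 ∧ pval n σ p.2 < pval n σ p.1)).card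
/-- Number of 31-2 patterns of `σ` in which the value `k` plays the role of the `2`. -/
def totk (n : ℕ) (σ : Equiv.Perm (Fin n)) (k : ℕ) : ℕ :=
  ((Finset.Icc 1 n ×ˢ Finset.Icc 1 n).filter (fun p =>
    p.1 + 1 < p.2 ∧ pval n σ (p.1 + 1) < pval n σ p.2 ∧ pval n σ p.2 < pval n σ p.1 ∧
      pval n σ p.2 = k)).card
/-- The set of recoils of `σ`: values `i` such that `i+1` is to the left of `i`. -/
def recSet (n : ℕ) (σ : Equiv.Perm (Fin n)) : Finset ℕ :=
  (Finset.Ico 1 n).filter (fun i => ppos n σ (i + 1) < ppos n σ i)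
/-- The Genocchi descent set of type 0 (convention `σ_{n+1} = 0`). -/
def gdes0Set (n : ℕ) (σ : Equiv.Perm (Fin n)) : Finset ℕ :=
  (Finset.Icc 1 n).filter (fun v => pval n σ (ppos n σ v + 1) < v)
/-- Descent set of the Genocchi composition of descents of type 0, `GC⁰(σ)`. -/
def gc0Set (n : ℕ) (σ : Equiv.Perm (Fin n)) : Finset ℕ :=
  (gdes0Set n σ).erase n

/-! ### Compositions -/
/-- Total weight of a weighted Dyck path. -/
def twW (n : ℕ) (w : ℕ → ℕ) : ℕ := ∑ i ∈ Finset.Icc 1 n, w i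
/-- Genocchi descent set of type 0 of a weighted Dyck path. -/
def gdes0SetW (n : ℕ) (D : ℕ → Bool) : Finset ℕ :=
  (Finset.Ico 1 n).filter (fun i => D (2 * i) = false)
/-- Descent set of type 0 of a weighted Dyck path. -/
def dc0SetW (n : ℕ) (D : ℕ → Bool) (w : ℕ → ℕ) : Finset ℕ :=
  (Finset.Ico 1 n).filter (fun i =>
    w (i + 1) < w i ∨ (w i = w (i + 1) ∧ D (2 * i + 1) = true))

/-! ### The Françon–Viennot bijection -/
/-- The Dyck path of the type-0 Françon–Viennot map (conventions `σ_0 = σ_{n+1} = 0`):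
the Françon–Viennot rules applied to the values `1, …, n-1`, an up-step prepended and a
down-step appended. -/
def fv0Path (n : ℕ) (σ : Equiv.Perm (Fin n)) : ℕ → Bool := fun m =>
  if m = 0 ∨ 2 * n < m then false
  else if m = 1 then true
  else if m = 2 * n then false
  else
    if (m - 1) % 2 = 1 then
      if pval n σ (ppos n σ (m / 2)) < pval n σ (ppos n σ (m / 2) + 1)
        then true else false
    else
      if pval n σ (ppos n σ ((m - 1) / 2) - 1) < pval n σ (ppos n σ ((m - 1) / 2))
        then false else true
/-- The weight of the type-0 Françon–Viennot map: `w k = tot_k σ` for `k ≤ n-1`,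
and a `0` appended at position `n`. -/
def fv0Weight (n : ℕ) (σ : Equiv.Perm (Fin n)) : ℕ → ℕ := fun k =>
  if 1 ≤ k ∧ k + 1 ≤ n then totk n σ k else 0

/-! ### The involution ψ on (weighted) Dyck paths -/

/-!
`tot_k σ` counts the steps `σ_a > k > σ_{a+1}` with `a + 1 < pos k`: the crossings of the level
`k` that end strictly before the letter `k`. Since no value lies strictly between `i` and `i + 1`, the crossings of these
two levels agree left of both letters, so `tot_i` and `tot_{i+1}` differ by the crossings between
them. If `i + 1` stands left of `i` (a recoil), then `tot_{i+1} ≤ tot_i`, with equality only when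
the word stays above `i` from `i + 1` up to the letter before `i`; otherwise `tot_i ≤ tot_{i+1}`,
and equality forces the letter before `i` to be below `i`, since a larger one would add a
crossing of `i + 1`. This is exactly the descent rule of `DC⁰` read on `w_i`, `w_{i+1}` and
`D_{2i+1}`. The Genocchi descents are read directly on the even steps, and `tot = ∑ tot_k`.
-/

section

variable {n : ℕ} {σ : Equiv.Perm (Fin n)} {i j k : ℕ}

lemma pval_eq_zero (h : ¬(1 ≤ j ∧ j ≤ n)) : pval n σ j = 0 := by
  rw [pval, dif_neg h]

lemma pval_bounds (h1 : 1 ≤ j) (h2 : j ≤ n) : 1 ≤ pval n σ j ∧ pval n σ j ≤ n := by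
  rw [pval, dif_pos ⟨h1, h2⟩]
  have := (σ ⟨j - 1, by omega⟩).isLt
  omega

lemma pval_le (j : ℕ) : pval n σ j ≤ n := by
  by_cases h : 1 ≤ j ∧ j ≤ n
  · exact (pval_bounds h.1 h.2).2
  · rw [pval_eq_zero h]; omega

lemma pos_of_lt_pval {x : ℕ} (h : x < pval n σ j) : 1 ≤ j := by
  by_contra hj
  rw [pval_eq_zero (by omega)] at h
  omega

lemma ppos_bounds (h1 : 1 ≤ k) (h2 : k ≤ n) : 1 ≤ ppos n σ k ∧ ppos n σ k ≤ n := by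
  rw [ppos, dif_pos ⟨h1, h2⟩]
  have := (σ.symm ⟨k - 1, by omega⟩).isLt
  omega

lemma pval_ppos (h1 : 1 ≤ k) (h2 : k ≤ n) : pval n σ (ppos n σ k) = k := by
  have hp := ppos_bounds (σ := σ) h1 h2
  rw [pval, dif_pos hp]
  simp only [ppos, dif_pos (And.intro h1 h2), Nat.add_sub_cancel, Fin.eta, Equiv.apply_symm_apply]
  omega

lemma pval_eq_iff (h1 : 1 ≤ k) (h2 : k ≤ n) : pval n σ j = k ↔ j = ppos n σ k := by
  refine ⟨fun h => ?_, fun h => h ▸ pval_ppos h1 h2⟩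
  have hj : 1 ≤ j ∧ j ≤ n := by
    by_contra hj; rw [pval_eq_zero hj] at h; omega
  rw [pval, dif_pos hj] at h
  have hσ : σ.symm ⟨k - 1, by omega⟩ = ⟨j - 1, by omega⟩ :=
    σ.symm_apply_eq.mpr (Fin.ext (by simp only; omega))
  rw [ppos, dif_pos ⟨h1, h2⟩, hσ, Fin.val_mk]
  omega

lemma pval_ne (h1 : 1 ≤ k) (h2 : k ≤ n) (h : j ≠ ppos n σ k) : pval n σ j ≠ k :=
  (pval_eq_iff h1 h2).not.mpr h

lemma totk_eq_zero_of_le (h : n ≤ k) : totk n σ k = 0 := by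
  rw [totk, Finset.card_eq_zero, Finset.filter_eq_empty_iff]
  rintro p - ⟨-, -, hlt, hk⟩
  have := pval_le (σ := σ) p.1
  omega

lemma tot_eq_sum_totk : tot n σ = ∑ k ∈ Finset.Icc 1 n, totk n σ k := by
  rw [tot, Finset.card_eq_sum_card_fiberwise (f := fun p => pval n σ p.2) (t := Finset.Icc 1 n)]
  · simp only [totk, Finset.filter_filter, and_assoc]
  · intro p hp
    simp only [Finset.coe_filter, Finset.mem_product, Finset.mem_Icc, Set.mem_ofPred_eq] at hp
    exact Finset.mem_Icc.mpr (pval_bounds hp.1.2.1 hp.1.2.2)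

def downCrossings (n : ℕ) (σ : Equiv.Perm (Fin n)) (x : ℕ) (s : Finset ℕ) : Finset ℕ :=
  s.filter fun a => x < pval n σ a ∧ pval n σ (a + 1) < x

lemma mem_downCrossings {x a : ℕ} {s : Finset ℕ} :
    a ∈ downCrossings n σ x s ↔ a ∈ s ∧ x < pval n σ a ∧ pval n σ (a + 1) < x :=
  Finset.mem_filter

/-- A 31-2 pattern whose `2` is `k` is a down-crossing of `k` at least two steps left of `k`. -/
lemma totk_eq_card_downCrossings (h1 : 1 ≤ k) (h2 : k ≤ n) :
    totk n σ k = (downCrossings n σ k (Finset.range (ppos n σ k - 1))).card := by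
  have hp := ppos_bounds (σ := σ) h1 h2
  have hset : (Finset.Icc 1 n ×ˢ Finset.Icc 1 n).filter (fun p =>
      p.1 + 1 < p.2 ∧ pval n σ (p.1 + 1) < pval n σ p.2 ∧ pval n σ p.2 < pval n σ p.1 ∧
        pval n σ p.2 = k) =
      downCrossings n σ k (Finset.range (ppos n σ k - 1)) ×ˢ {ppos n σ k} := by
    ext ⟨a, b⟩
    simp only [Finset.mem_filter, Finset.mem_product, Finset.mem_Icc, Finset.mem_range,
      Finset.mem_singleton, mem_downCrossings, pval_eq_iff h1 h2]
    constructor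
    · rintro ⟨-, hab, hlt, hgt, rfl⟩
      rw [pval_ppos h1 h2] at hlt hgt
      exact ⟨⟨by omega, hgt, hlt⟩, rfl⟩
    · rintro ⟨⟨ha, hgt, hlt⟩, rfl⟩
      rw [pval_ppos h1 h2]
      exact ⟨⟨⟨pos_of_lt_pval hgt, by omega⟩, hp⟩, by omega, hlt, hgt, rfl⟩
  rw [totk, hset, Finset.card_product, Finset.card_singleton, mul_one]

lemma card_downCrossings_range_add {x m r : ℕ} (hmr : m ≤ r) :
    (downCrossings n σ x (Finset.range m)).card + (downCrossings n σ x (Finset.Ico m r)).card =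
      (downCrossings n σ x (Finset.range r)).card := by
  unfold downCrossings
  rw [Finset.range_eq_Ico, Finset.range_eq_Ico, ← Finset.Ico_union_Ico_eq_Ico m.zero_le hmr,
    Finset.filter_union, Finset.card_union_of_disjoint
      (Finset.disjoint_filter_filter (Finset.Ico_disjoint_Ico_consecutive 0 m r))]

/-- No value lies strictly between `i` and `i + 1`, so left of both letters the two levels are
crossed at the same steps. -/
lemma downCrossings_succ_eq (h1 : 1 ≤ i) (h2 : i < n) {m : ℕ}
    (hm : m ≤ ppos n σ i) (hm' : m ≤ ppos n σ (i + 1)) :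
    downCrossings n σ (i + 1) (Finset.range (m - 1)) =
      downCrossings n σ i (Finset.range (m - 1)) := by
  refine Finset.filter_congr fun a ha => ?_
  rw [Finset.mem_range] at ha
  have := pval_ne (σ := σ) (j := a) h1 h2.le (by omega)
  have := pval_ne (σ := σ) (j := a + 1) h1 h2.le (by omega)
  have := pval_ne (σ := σ) (j := a) (k := i + 1) (by omega) h2 (by omega)
  have := pval_ne (σ := σ) (j := a + 1) (k := i + 1) (by omega) h2 (by omega)
  omega

lemma totk_eq_totk_succ_add_of_recoil (h1 : 1 ≤ i) (h2 : i < n)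
    (hqp : ppos n σ (i + 1) < ppos n σ i) :
    totk n σ i = totk n σ (i + 1) +
      (downCrossings n σ i (Finset.Ico (ppos n σ (i + 1) - 1) (ppos n σ i - 1))).card := by
  rw [totk_eq_card_downCrossings h1 h2.le, totk_eq_card_downCrossings (by omega) h2,
    downCrossings_succ_eq h1 h2 hqp.le le_rfl, card_downCrossings_range_add (by omega)]

lemma totk_succ_eq_totk_add_of_not_recoil (h1 : 1 ≤ i) (h2 : i < n)
    (hpq : ppos n σ i < ppos n σ (i + 1)) :
    totk n σ (i + 1) = totk n σ i +
      (downCrossings n σ (i + 1) (Finset.Ico (ppos n σ i - 1) (ppos n σ (i + 1) - 1))).card := by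
  rw [totk_eq_card_downCrossings h1 h2.le, totk_eq_card_downCrossings (by omega) h2,
    ← downCrossings_succ_eq h1 h2 le_rfl hpq.le, card_downCrossings_range_add (by omega)]

/-- Between the positions of `i + 1` and `i`, the word can only fall below `i` by crossing it. -/
lemma lt_pval_pred_ppos_of_recoil (h1 : 1 ≤ i) (h2 : i < n)
    (hqp : ppos n σ (i + 1) < ppos n σ i) (heq : totk n σ i = totk n σ (i + 1)) :
    i < pval n σ (ppos n σ i - 1) := by
  have hq := ppos_bounds (σ := σ) (k := i + 1) (by omega) h2
  have hempty : downCrossings n σ i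
      (Finset.Ico (ppos n σ (i + 1) - 1) (ppos n σ i - 1)) = ∅ := by
    have := totk_eq_totk_succ_add_of_recoil h1 h2 hqp
    rw [← Finset.card_eq_zero]
    omega
  have hstay : ∀ a, ppos n σ (i + 1) ≤ a → a ≤ ppos n σ i - 1 → i < pval n σ a := by
    intro a ha
    induction a, ha using Nat.le_induction with
    | base => intro; rw [pval_ppos (by omega) h2]; omega
    | succ a ha ih =>
      intro ha'
      have hnot : a ∉ downCrossings n σ i
          (Finset.Ico (ppos n σ (i + 1) - 1) (ppos n σ i - 1)) := hempty ▸ Finset.notMem_empty a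
      rw [mem_downCrossings, Finset.mem_Ico] at hnot
      have := pval_ne (σ := σ) (j := a + 1) h1 h2.le (by omega)
      have := ih (by omega)
      omega
  exact hstay _ (by omega) le_rfl

lemma pval_pred_ppos_lt_of_not_recoil (h1 : 1 ≤ i) (h2 : i < n)
    (hpq : ppos n σ i < ppos n σ (i + 1)) (heq : totk n σ i = totk n σ (i + 1)) :
    pval n σ (ppos n σ i - 1) < i := by
  have hp := ppos_bounds (σ := σ) h1 h2.le
  by_contra hge
  have hgt : i + 1 < pval n σ (ppos n σ i - 1) := by
    have := pval_ne (σ := σ) (j := ppos n σ i - 1) h1 h2.le (by omega)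
    have := pval_ne (σ := σ) (j := ppos n σ i - 1) (k := i + 1) (by omega) h2 (by omega)
    omega
  have hmem : ppos n σ i - 1 ∈ downCrossings n σ (i + 1)
      (Finset.Ico (ppos n σ i - 1) (ppos n σ (i + 1) - 1)) := by
    rw [mem_downCrossings, Finset.mem_Ico, Nat.sub_add_cancel hp.1, pval_ppos h1 h2.le]
    omega
  have := totk_succ_eq_totk_add_of_not_recoil h1 h2 hpq
  have := Finset.card_pos.mpr ⟨_, hmem⟩
  omega

lemma ppos_succ_lt_ppos_iff (h1 : 1 ≤ i) (h2 : i < n) :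
    ppos n σ (i + 1) < ppos n σ i ↔ totk n σ (i + 1) < totk n σ i ∨
      (totk n σ i = totk n σ (i + 1) ∧ i < pval n σ (ppos n σ i - 1)) := by
  constructor
  · intro hqp
    have := totk_eq_totk_succ_add_of_recoil h1 h2 hqp
    rcases Nat.lt_or_ge (totk n σ (i + 1)) (totk n σ i) with hlt | hge
    · exact Or.inl hlt
    · have heq : totk n σ i = totk n σ (i + 1) := by omega
      exact Or.inr ⟨heq, lt_pval_pred_ppos_of_recoil h1 h2 hqp heq⟩
  · intro h
    by_contra hqp
    have hpq : ppos n σ i < ppos n σ (i + 1) := by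
      have : ppos n σ (i + 1) ≠ ppos n σ i := fun he => by
        have := pval_ppos (σ := σ) (k := i + 1) (by omega) h2
        rw [he, pval_ppos h1 h2.le] at this
        omega
      omega
    have := totk_succ_eq_totk_add_of_not_recoil h1 h2 hpq
    rcases h with hlt | ⟨heq, hgt⟩
    · omega
    · have := pval_pred_ppos_lt_of_not_recoil h1 h2 hpq heq
      omega

lemma fv0Path_two_mul_eq_false_iff (h1 : 1 ≤ i) (h2 : i < n) :
    fv0Path n σ (2 * i) = false ↔ pval n σ (ppos n σ i + 1) < i := by
  have := pval_ne (σ := σ) (j := ppos n σ i + 1) h1 h2.le (by omega)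
  rw [fv0Path, if_neg (by omega), if_neg (by omega), if_neg (by omega), if_pos (by omega),
    show 2 * i / 2 = i by omega, pval_ppos h1 h2.le]
  split_ifs <;> simp only [false_iff, true_iff] <;> omega

lemma fv0Path_two_mul_add_one_eq_true_iff (h1 : 1 ≤ i) (h2 : i < n) :
    fv0Path n σ (2 * i + 1) = true ↔ i < pval n σ (ppos n σ i - 1) := by
  have := pval_ne (σ := σ) (j := ppos n σ i - 1) h1 h2.le
    (by have := ppos_bounds (σ := σ) h1 h2.le; omega)
  rw [fv0Path, if_neg (by omega), if_neg (by omega), if_neg (by omega), if_neg (by omega),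
    show (2 * i + 1 - 1) / 2 = i by omega, pval_ppos h1 h2.le]
  split_ifs <;> simp only [false_iff, true_iff] <;> omega

lemma fv0Weight_eq_totk (hk : 1 ≤ k) : fv0Weight n σ k = totk n σ k := by
  rw [fv0Weight]
  split_ifs with h
  · rfl
  · rw [totk_eq_zero_of_le (by omega)]

end

/-- Proposition: for `(D, w) = ψ_FV⁰(σ)` (type-0 Françon–Viennot map) one has
`GC⁰ σ = GC⁰ (D,w)`, `Rec σ = DC⁰ (D,w)` and `tot σ = tw (D,w)` (compositions
identified with their descent sets). -/
theorem stats_through_FV0 (n : ℕ) (σ : Equiv.Perm (Fin n)) :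
    gc0Set n σ = gdes0SetW n (fv0Path n σ) ∧
    recSet n σ = dc0SetW n (fv0Path n σ) (fv0Weight n σ) ∧
    tot n σ = twW n (fv0Weight n σ) := by
  refine ⟨?_, ?_, ?_⟩
  · ext i
    simp only [gc0Set, gdes0Set, gdes0SetW, Finset.mem_erase, Finset.mem_filter,
      Finset.mem_Icc, Finset.mem_Ico]
    constructor
    · rintro ⟨hne, ⟨h1, h2⟩, hlt⟩
      exact ⟨⟨h1, by omega⟩, (fv0Path_two_mul_eq_false_iff h1 (by omega)).2 hlt⟩
    · rintro ⟨⟨h1, h2⟩, hD⟩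
      exact ⟨by omega, ⟨h1, h2.le⟩, (fv0Path_two_mul_eq_false_iff h1 h2).1 hD⟩
  · ext i
    simp only [recSet, dc0SetW, Finset.mem_filter, Finset.mem_Ico]
    refine and_congr_right fun ⟨h1, h2⟩ => ?_
    rw [fv0Weight_eq_totk h1, fv0Weight_eq_totk (by omega : 1 ≤ i + 1),
      fv0Path_two_mul_add_one_eq_true_iff h1 h2, ppos_succ_lt_ppos_iff h1 h2]
  · rw [twW, tot_eq_sum_totk]
    exact Finset.sum_congr rfl fun k hk =>
      (fv0Weight_eq_totk (Finset.mem_Icc.1 hk).1).symm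
end
end

section
/- Let σ be a permutation and let i < j < k be positions such that σ_j < σ_k < σ_i. Then there exists a position r with i ≤ r < k−1 such that σ_r > σ_k > σ_{r+1}; that is, σ_k stands for the 2 in a 31-2 pattern whose 31 part lies at position r ≥ i. -/
open scoped Classical
noncomputable section

lemma pval_inj (n : ℕ) (σ : Equiv.Perm (Fin n)) (a b : ℕ)
    (ha : 1 ≤ a ∧ a ≤ n) (hb : 1 ≤ b ∧ b ≤ n) (h : pval n σ a = pval n σ b) : a = b := by
  unfold pval at h
  rw [dif_pos ha, dif_pos hb] at h
  have h2 : (⟨a - 1, by omega⟩ : Fin n) = ⟨b - 1, by omega⟩ :=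
    σ.injective (Fin.ext (by omega))
  have h3 : a - 1 = b - 1 := congrArg Fin.val h2
  omega

/-- Lemma: if positions `i < j < k` satisfy `σ_j < σ_k < σ_i` (a 3-1-2 pattern), then
there is a position `r` with `i ≤ r < k - 1` such that `σ_r > σ_k > σ_{r+1}`, i.e.
`σ_k` stands for the `2` of a 31-2 pattern whose `31` part lies at position `r ≥ i`. -/
theorem pattern_312_to_31_2 (n : ℕ) (σ : Equiv.Perm (Fin n)) (i j k : ℕ)
    (hi : 1 ≤ i) (hij : i < j) (hjk : j < k) (hk : k ≤ n)
    (h1 : pval n σ j < pval n σ k) (h2 : pval n σ k < pval n σ i) :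
    ∃ r, i ≤ r ∧ r < k - 1 ∧ pval n σ (r + 1) < pval n σ k ∧
      pval n σ k < pval n σ r := by
  have hP : ∃ t, pval n σ (i + t + 1) < pval n σ k := by
    refine ⟨j - i - 1, ?_⟩
    have : i + (j - i - 1) + 1 = j := by omega
    rw [this]; exact h1
  classical
  set m := Nat.find hP with hm
  have hfind : pval n σ (i + m + 1) < pval n σ k := Nat.find_spec hP
  have hmle : m ≤ j - i - 1 := Nat.find_le (by
    have : i + (j - i - 1) + 1 = j := by omega
    rw [this]; exact h1)
  refine ⟨i + m, by omega, by omega, hfind, ?_⟩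
  rcases Nat.eq_zero_or_pos m with h0 | h0
  · simpa [h0] using h2
  · have hnot : ¬ pval n σ (i + (m - 1) + 1) < pval n σ k := Nat.find_min hP (by omega)
    have heq : i + (m - 1) + 1 = i + m := by omega
    rw [heq] at hnot
    have hle : pval n σ k ≤ pval n σ (i + m) := le_of_not_gt hnot
    rcases lt_or_eq_of_le hle with h | h
    · exact h
    · exfalso
      have := pval_inj n σ k (i + m) ⟨by omega, hk⟩ ⟨by omega, by omega⟩ h
      omega
end
end
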